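/- arXiv:1811.09917 — 2 statements merged into one kernel-verified Lean document; each statement's English description precedes it below -/
import Mathlib

section
/- Let A ∈ ℝ^{n×n} be a Z-matrix (all off-diagonal entries nonpositive). If there exists a vector x with all entries strictly positive such that Ax has all entries strictly positive, then A is invertible and A⁻¹ has all entries nonnegative. -/
/-!
If `x > 0` and `A x > 0`, then `A z ≥ 0` forces `z ≥ 0`: otherwise take the index `i`
minimising `z j / x j`, so that `t = z i / x i < 0` and `w = z - t x` is nonnegative with
`w i = 0`. Since the off-diagonal entries of `A` are nonpositive, `(A w) i ≤ 0`, whereas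
`(A w) i = (A z) i - t (A x) i > 0`. Applied to `±z` this gives injectivity of `A`, and applied
to the columns of `A⁻¹` (which `A` maps to standard basis vectors) their nonnegativity.
-/

open Matrix

namespace Matrix

def IsZMatrix {ι R : Type*} [Zero R] [LE R] (A : Matrix ι ι R) : Prop :=
  ∀ i j, i ≠ j → A i j ≤ 0

namespace IsZMatrix

variable {ι : Type*} [Fintype ι]

theorem mulVec_apply_nonpos_of_apply_eq_zero {R : Type*} [Ring R] [PartialOrder R]
    [IsOrderedRing R] {A : Matrix ι ι R} (hA : A.IsZMatrix) {w : ι → R} (hw : 0 ≤ w) {i : ι}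
    (hwi : w i = 0) : (A *ᵥ w) i ≤ 0 := by
  refine Finset.sum_nonpos fun j _ => ?_
  by_cases hji : j = i
  · simp [hji, hwi]
  · exact mul_nonpos_of_nonpos_of_nonneg (hA i j (Ne.symm hji)) (hw j)

variable {𝕜 : Type*} [Field 𝕜] [LinearOrder 𝕜] [IsStrictOrderedRing 𝕜]
  {A : Matrix ι ι 𝕜} {x : ι → 𝕜}

theorem nonneg_of_mulVec_nonneg (hA : A.IsZMatrix) (hx : ∀ i, 0 < x i)
    (hAx : ∀ i, 0 < (A *ᵥ x) i) {z : ι → 𝕜} (hz : 0 ≤ A *ᵥ z) : 0 ≤ z := by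
  by_contra hneg
  obtain ⟨i₀, hi₀⟩ : ∃ i, z i < 0 := by simpa [Pi.le_def] using hneg
  obtain ⟨i, -, hmin⟩ :=
    Finset.exists_min_image Finset.univ (fun j => z j / x j) ⟨i₀, Finset.mem_univ i₀⟩
  set t := z i / x i
  have ht : t < 0 :=
    (hmin i₀ (Finset.mem_univ _)).trans_lt (div_neg_of_neg_of_pos hi₀ (hx i₀))
  have hw : 0 ≤ z - t • x := fun j => by
    simpa using (le_div_iff₀ (hx j)).mp (hmin j (Finset.mem_univ j))
  have hwi : (z - t • x) i = 0 := by
    simp [t, div_mul_cancel₀ _ (hx i).ne']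
  have hpos : 0 < (A *ᵥ (z - t • x)) i := by
    rw [mulVec_sub, mulVec_smul, Pi.sub_apply, Pi.smul_apply, smul_eq_mul]
    have hzi : 0 ≤ (A *ᵥ z) i := hz i
    linarith [mul_neg_of_neg_of_pos ht (hAx i)]
  exact (hA.mulVec_apply_nonpos_of_apply_eq_zero hw hwi).not_gt hpos

theorem mulVec_injective (hA : A.IsZMatrix) (hx : ∀ i, 0 < x i)
    (hAx : ∀ i, 0 < (A *ᵥ x) i) : Function.Injective A.mulVec := by
  intro a b hab
  have key : ∀ u v : ι → 𝕜, A *ᵥ u = A *ᵥ v → v ≤ u := fun u v huv => by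
    simpa using hA.nonneg_of_mulVec_nonneg hx hAx (z := u - v) (by simp [mulVec_sub, huv])
  exact le_antisymm (key b a hab.symm) (key a b hab)

variable [DecidableEq ι]

theorem isUnit (hA : A.IsZMatrix) (hx : ∀ i, 0 < x i) (hAx : ∀ i, 0 < (A *ᵥ x) i) :
    IsUnit A :=
  mulVec_injective_iff_isUnit.mp (hA.mulVec_injective hx hAx)

theorem inv_nonneg (hA : A.IsZMatrix) (hx : ∀ i, 0 < x i) (hAx : ∀ i, 0 < (A *ᵥ x) i)
    (i j : ι) : 0 ≤ A⁻¹ i j := by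
  have hdet : IsUnit A.det := (isUnit_iff_isUnit_det A).mp (hA.isUnit hx hAx)
  have hcol : A *ᵥ (A⁻¹ *ᵥ Pi.single j 1) = Pi.single j 1 := by
    rw [mulVec_mulVec, mul_nonsing_inv A hdet, one_mulVec]
  have := hA.nonneg_of_mulVec_nonneg hx hAx (hcol ▸ Pi.single_nonneg.mpr zero_le_one)
  simpa [mulVec_single] using this i

end IsZMatrix

end Matrix

/-- A Z-matrix that maps some strictly positive vector to a strictly
positive vector is a nonsingular M-matrix: it is invertible and its
inverse is entrywise nonnegative. -/
theorem stmt_2 {n : ℕ} (A : Matrix (Fin n) (Fin n) ℝ)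
    (hZ : ∀ i j, i ≠ j → A i j ≤ 0)
    (hx : ∃ x : Fin n → ℝ, (∀ i, 0 < x i) ∧ ∀ i, 0 < A.mulVec x i) :
    IsUnit A ∧ ∀ i j, 0 ≤ A⁻¹ i j := by
  obtain ⟨x, hxpos, hAx⟩ := hx
  exact ⟨IsZMatrix.isUnit hZ hxpos hAx, IsZMatrix.inv_nonneg hZ hxpos hAx⟩
end

section
/- Let 𝒜 ∈ T_{m,n} have positive diagonal entries and nonpositive off-diagonal entries and b ∈ ℝⁿ₊. Define J(x) = { i : (𝒜x^{m-1})_i = b_i and x_i = 0 }. If x, y ∈ ℝⁿ satisfy 0 ≤ y ≤ x componentwise, 𝒜x^{m-1} ≥ b, 𝒜y^{m-1} ≥ b, then J(x) ⊆ J(y). -/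
lemma aux_18 {n m' : ℕ} (hm : 1 ≤ m')
    (A : Fin n → (Fin m' → Fin n) → ℝ)
    (hoff : ∀ i (g : Fin m' → Fin n), g ≠ (fun _ => i) → A i g ≤ 0)
    (z : Fin n → ℝ) (hz0 : ∀ j, 0 ≤ z j) (i : Fin n) (hzi : z i = 0) :
    (∑ g : Fin m' → Fin n, A i g * ∏ t, z (g t)) ≤ 0 := by
  apply Finset.sum_nonpos
  intro g _
  by_cases hg : g = (fun _ => i)
  · subst hg
    simp [hzi, Finset.prod_const, zero_pow (by omega : m' ≠ 0)]
  · exact mul_nonpos_of_nonpos_of_nonneg (hoff i g hg)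
      (Finset.prod_nonneg (fun t _ => hz0 (g t)))

/-- For 𝒜 with positive diagonal and nonpositive off-diagonal entries and b ≥ 0,
define J(x) = {i : (𝒜x^{m-1})_i = b_i and x_i = 0}. If 0 ≤ y ≤ x, 𝒜x^{m-1} ≥ b
and 𝒜y^{m-1} ≥ b, then J(x) ⊆ J(y). -/
theorem stmt_18 {n m' : ℕ} (hm : 1 ≤ m')
    (A : Fin n → (Fin m' → Fin n) → ℝ)
    (hdiag : ∀ i, 0 < A i (fun _ => i))
    (hoff : ∀ i (g : Fin m' → Fin n), g ≠ (fun _ => i) → A i g ≤ 0)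
    (b : Fin n → ℝ) (hb : ∀ i, 0 ≤ b i)
    (x y : Fin n → ℝ) (hy0 : ∀ j, 0 ≤ y j) (hyx : ∀ j, y j ≤ x j)
    (hxsol : ∀ i, b i ≤ ∑ g : Fin m' → Fin n, A i g * ∏ t, x (g t))
    (hysol : ∀ i, b i ≤ ∑ g : Fin m' → Fin n, A i g * ∏ t, y (g t)) :
    {i : Fin n | (∑ g : Fin m' → Fin n, A i g * ∏ t, x (g t)) = b i ∧ x i = 0}
      ⊆ {i : Fin n | (∑ g : Fin m' → Fin n, A i g * ∏ t, y (g t)) = b i ∧ y i = 0} := by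
  intro i hi
  obtain ⟨hAx, hxi⟩ := hi
  have hx0 : ∀ j, 0 ≤ x j := fun j => le_trans (hy0 j) (hyx j)
  have hbx : (∑ g : Fin m' → Fin n, A i g * ∏ t, x (g t)) ≤ 0 :=
    aux_18 hm A hoff x hx0 i hxi
  have hbi : b i = 0 := le_antisymm (hAx ▸ hbx) (hb i)
  have hyi : y i = 0 := le_antisymm (hxi ▸ hyx i) (hy0 i)
  have hby : (∑ g : Fin m' → Fin n, A i g * ∏ t, y (g t)) ≤ 0 :=
    aux_18 hm A hoff y hy0 i hyi
  exact ⟨le_antisymm (hbi ▸ hby) (hbi ▸ hysol i), hyi⟩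
end
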